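/- Under the same hypotheses (K bounded on a Hilbert space H, closed subspaces Z_p with K(Z_{p-1}) ⊆ Z_p and K*(Z_{p-1}) ⊆ Z_p for p ≥ 1, orthogonal projections P_p, and C := max{‖(I−P₀)K‖, ‖(I−P₀)K*‖}), for every r ≥ 1 and every p ≥ r−1 one has ‖(I−P_p)K^r‖ ≤ C^r. -/

import Mathlib

open ContinuousLinearMap

/-- The orthogonal projection onto a submodule, as an operator on the ambient space. -/
noncomputable def proj {H : Type*} [NormedAddCommGroup H] [InnerProductSpace ℝ H]
    (Z : Submodule ℝ H) [Z.HasOrthogonalProjection] : H →L[ℝ] H :=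
  Z.subtypeL.comp Z.orthogonalProjectionOnto

/-!
If `K` maps `Z (p-1)` into `Z p`, then `(I - P_p) K` does not see the `Z (p-1)`-component
of its argument, so `(I - P_p) K^(r+1) = ((I - P_p) K) ((I - P_(p-1)) K^r)`. Each factor `(I - P_q) K`
has norm at most `‖(I - P₀) K‖ ≤ C`, because `Z 0 ≤ Z q` gives `I - P_q = (I - P_q)(I - P₀)`, and
induction on `r` finishes.
-/

section

variable {H : Type*} [NormedAddCommGroup H] [InnerProductSpace ℝ H]

lemma one_sub_proj_eq_starProjection_orthogonal (Z : Submodule ℝ H) [Z.HasOrthogonalProjection] :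
    1 - proj Z = Zᗮ.starProjection :=
  Z.starProjection_orthogonal'.symm

lemma norm_one_sub_proj_le (Z : Submodule ℝ H) [Z.HasOrthogonalProjection] :
    ‖1 - proj Z‖ ≤ 1 := by
  rw [one_sub_proj_eq_starProjection_orthogonal]
  exact Zᗮ.starProjection_norm_le

lemma one_sub_proj_comp_eq_comp_one_sub_proj {V W : Submodule ℝ H} [V.HasOrthogonalProjection]
    [W.HasOrthogonalProjection] (T : H →L[ℝ] H) (hT : ∀ x ∈ W, T x ∈ V) :
    (1 - proj V).comp T = ((1 - proj V).comp T).comp (1 - proj W) := by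
  ext x
  have hW : _root_.proj W x ∈ W := Submodule.starProjection_apply_mem W x
  have hker : (1 - _root_.proj V) (T (_root_.proj W x)) = 0 := by
    rw [one_sub_proj_eq_starProjection_orthogonal]
    exact Submodule.starProjection_orthogonal_apply_eq_zero (hT _ hW)
  simp only [comp_apply, sub_apply, one_apply_eq_self, map_sub, hker, sub_zero]

lemma norm_one_sub_proj_comp_le_of_le {V W : Submodule ℝ H} [V.HasOrthogonalProjection]
    [W.HasOrthogonalProjection] (hWV : W ≤ V) (T : H →L[ℝ] H) :
    ‖(1 - proj V).comp T‖ ≤ ‖(1 - proj W).comp T‖ := by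
  have hsplit : 1 - _root_.proj V = (1 - _root_.proj V).comp (1 - _root_.proj W) :=
    one_sub_proj_comp_eq_comp_one_sub_proj 1 fun _ hx => hWV hx
  calc ‖(1 - _root_.proj V).comp T‖
        = ‖(1 - _root_.proj V).comp ((1 - _root_.proj W).comp T)‖ := by
        rw [← comp_assoc, ← hsplit]
    _ ≤ ‖1 - _root_.proj V‖ * ‖(1 - _root_.proj W).comp T‖ := opNorm_comp_le _ _
    _ ≤ ‖(1 - _root_.proj W).comp T‖ :=
        mul_le_of_le_one_left (norm_nonneg _) (norm_one_sub_proj_le V)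

theorem norm_one_sub_proj_comp_pow_le {Z : ℕ → Submodule ℝ H} [∀ p, (Z p).HasOrthogonalProjection]
    (K : H →L[ℝ] H) {C : ℝ} (hK : ∀ p, ∀ x ∈ Z p, K x ∈ Z (p + 1))
    (hC : ∀ p, ‖(1 - proj (Z p)).comp K‖ ≤ C) :
    ∀ r p, r ≤ p + 1 → ‖(1 - proj (Z p)).comp (K ^ r)‖ ≤ C ^ r := by
  have hC0 : 0 ≤ C := (norm_nonneg _).trans (hC 0)
  intro r
  induction r with
  | zero =>
    intro p _
    rw [pow_zero]
    exact norm_one_sub_proj_le (Z p)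
  | succ r ih =>
    rintro (_ | q) hr
    · obtain rfl : r = 0 := by omega
      simpa only [zero_add, pow_one] using hC 0
    · have hfactor : (1 - _root_.proj (Z (q + 1))).comp (K ^ (r + 1)) =
          ((1 - _root_.proj (Z (q + 1))).comp K).comp ((1 - _root_.proj (Z q)).comp (K ^ r)) := by
        rw [pow_succ', mul_def, ← comp_assoc]
        conv_lhs => rw [one_sub_proj_comp_eq_comp_one_sub_proj K (hK q)]
        rfl
      rw [hfactor, pow_succ']
      exact (opNorm_comp_le _ _).trans
        (mul_le_mul (hC _) (ih q (by omega)) (norm_nonneg _) hC0)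

end

theorem stmt2_general {H : Type*} [NormedAddCommGroup H] [InnerProductSpace ℝ H] [CompleteSpace H]
    (K : H →L[ℝ] H) (Z : ℕ → Submodule ℝ H) [∀ p, (Z p).HasOrthogonalProjection]
    (hmono : Monotone Z)
    (hK : ∀ p : ℕ, 1 ≤ p → ∀ x ∈ Z (p - 1), K x ∈ Z p)
    (C : ℝ)
    (hC : C = max ‖(1 - proj (Z 0)).comp K‖
               ‖(1 - proj (Z 0)).comp (ContinuousLinearMap.adjoint K)‖)
    (r p : ℕ) (hp : r - 1 ≤ p) :
    ‖(1 - proj (Z p)).comp (K ^ r)‖ ≤ C ^ r := by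
  have hKC : ∀ q, ‖(1 - proj (Z q)).comp K‖ ≤ C := fun q =>
    (norm_one_sub_proj_comp_le_of_le (hmono q.zero_le) K).trans (hC ▸ le_max_left _ _)
  exact norm_one_sub_proj_comp_pow_le K (fun q => hK (q + 1) q.succ_pos) hKC r p (by omega)

theorem stmt2 {H : Type*} [NormedAddCommGroup H] [InnerProductSpace ℝ H] [CompleteSpace H]
    (K : H →L[ℝ] H) (Z : ℕ → Submodule ℝ H) [∀ p, (Z p).HasOrthogonalProjection]
    (hmono : Monotone Z)
    (hK : ∀ p : ℕ, 1 ≤ p → ∀ x ∈ Z (p - 1), K x ∈ Z p)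
    (hKadj : ∀ p : ℕ, 1 ≤ p → ∀ x ∈ Z (p - 1), ContinuousLinearMap.adjoint K x ∈ Z p)
    (C : ℝ)
    (hC : C = max ‖(1 - proj (Z 0)).comp K‖
               ‖(1 - proj (Z 0)).comp (ContinuousLinearMap.adjoint K)‖)
    (r p : ℕ) (hr : 1 ≤ r) (hp : r - 1 ≤ p) :
    ‖(1 - proj (Z p)).comp (K ^ r)‖ ≤ C ^ r :=
  stmt2_general K Z hmono hK C hC r p hp
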